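/- arXiv:2002.07469 — 2 statements merged into one kernel-verified Lean document; each statement's English description precedes it below -/
import Mathlib

section
/- The truncated Gaussian activation λ(α) = α + N(α)/Φ(α) tends to 0 as α → −∞. -/
/-!
For `a < 0` the Mills-ratio bounds `-a / (a ^ 2 + 1) * N(a) ≤ Φ(a) ≤ N(a) / (-a)` hold: since
`N' = -t N`, they follow by integrating `N(t) ≤ t N(t) / a` and
`(-t N(t) / (t ^ 2 + 1))' = (1 - 2 / (t ^ 2 + 1) ^ 2) N(t) ≤ N(t)` over `(-∞, a]`.
Hence `-a ≤ N(a) / Φ(a) ≤ -a - 1 / a`, which squeezes `λ(a)` between `0` and `-1 / a`.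
-/

open Real MeasureTheory Filter

noncomputable def gaussPdf (x : ℝ) : ℝ := Real.exp (-x ^ 2 / 2) / Real.sqrt (2 * Real.pi)

noncomputable def gaussCdf (x : ℝ) : ℝ := ∫ t in Set.Iic x, gaussPdf t

open Set Topology

theorem setIntegral_Iic_le_of_hasDerivAt {f f' g : ℝ → ℝ} {a m : ℝ}
    (hderiv : ∀ x ∈ Iic a, HasDerivAt f (f' x) x) (hf' : IntegrableOn f' (Iic a))
    (hf : Tendsto f atBot (𝓝 m)) (hg : IntegrableOn g (Iic a))
    (hle : ∀ x ∈ Iic a, g x ≤ f' x) : ∫ x in Iic a, g x ≤ f a - m := by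
  rw [← integral_Iic_of_hasDerivAt_of_tendsto' hderiv hf' hf]
  exact setIntegral_mono_on hg hf' measurableSet_Iic hle

theorem le_setIntegral_Iic_of_hasDerivAt {f f' g : ℝ → ℝ} {a m : ℝ}
    (hderiv : ∀ x ∈ Iic a, HasDerivAt f (f' x) x) (hf' : IntegrableOn f' (Iic a))
    (hf : Tendsto f atBot (𝓝 m)) (hg : IntegrableOn g (Iic a))
    (hle : ∀ x ∈ Iic a, f' x ≤ g x) : f a - m ≤ ∫ x in Iic a, g x := by
  rw [← integral_Iic_of_hasDerivAt_of_tendsto' hderiv hf' hf]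
  exact setIntegral_mono_on hf' hg measurableSet_Iic hle

theorem gaussPdf_eq : gaussPdf = fun x ↦ exp (-(1 / 2) * x ^ 2) / √(2 * π) := by
  ext x
  rw [gaussPdf]
  ring_nf

theorem gaussPdf_pos (x : ℝ) : 0 < gaussPdf x := by
  unfold gaussPdf
  positivity

theorem integrable_gaussPdf : Integrable gaussPdf := by
  rw [gaussPdf_eq]
  exact (integrable_exp_neg_mul_sq (by norm_num)).div_const _

theorem integrable_mul_gaussPdf : Integrable fun x ↦ x * gaussPdf x := by
  simp only [gaussPdf_eq, ← mul_div_assoc]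
  exact (integrable_mul_exp_neg_mul_sq (by norm_num)).div_const _

theorem tendsto_gaussPdf_atBot : Tendsto gaussPdf atBot (𝓝 0) := by
  have h := (tendsto_rpow_abs_mul_exp_neg_mul_sq_cocompact (by norm_num : (0 : ℝ) < 1 / 2)
    0).mono_left atBot_le_cocompact
  rw [gaussPdf_eq, ← zero_div √(2 * π)]
  simpa only [rpow_zero, one_mul] using h.div_const √(2 * π)

theorem hasDerivAt_gaussPdf (x : ℝ) : HasDerivAt gaussPdf (-x * gaussPdf x) x := by
  have h : HasDerivAt (fun x : ℝ ↦ -x ^ 2 / 2) (-x) x :=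
    ((hasDerivAt_pow 2 x).neg.div_const 2).congr_deriv (by norm_num; ring)
  exact (h.exp.div_const √(2 * π)).congr_deriv (by rw [gaussPdf]; ring)

theorem gaussCdf_pos (a : ℝ) : 0 < gaussCdf a := by
  rw [gaussCdf, setIntegral_pos_iff_support_of_nonneg_ae (.of_forall fun x ↦ (gaussPdf_pos x).le)
    integrable_gaussPdf.integrableOn, Function.support_eq_univ fun x ↦ (gaussPdf_pos x).ne',
    univ_inter]
  simp

theorem gaussCdf_le_gaussPdf_div_neg {a : ℝ} (ha : a < 0) : gaussCdf a ≤ gaussPdf a / -a := by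
  have hle (x : ℝ) (hx : x ≤ a) : gaussPdf x ≤ -x * gaussPdf x / -a := by
    rw [le_div_iff₀ (neg_pos.2 ha)]
    nlinarith [gaussPdf_pos x]
  have h := setIntegral_Iic_le_of_hasDerivAt (f := fun x ↦ gaussPdf x / -a)
    (fun x _ ↦ (hasDerivAt_gaussPdf x).div_const (-a))
    (by simpa using (integrable_mul_gaussPdf.neg.div_const (-a)).integrableOn)
    (by simpa using tendsto_gaussPdf_atBot.div_const (-a))
    integrable_gaussPdf.integrableOn hle
  rwa [sub_zero] at h

noncomputable def millsLowerBound (x : ℝ) : ℝ := -x / (x ^ 2 + 1) * gaussPdf x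

theorem hasDerivAt_millsLowerBound (x : ℝ) :
    HasDerivAt millsLowerBound ((1 - 2 / (x ^ 2 + 1) ^ 2) * gaussPdf x) x := by
  have hden : x ^ 2 + 1 ≠ 0 := by positivity
  have h := ((hasDerivAt_id x).neg.div ((hasDerivAt_pow 2 x).add_const 1) hden).mul
    (hasDerivAt_gaussPdf x)
  refine h.congr_deriv ?_
  simp only [Pi.neg_apply, Pi.div_apply, id]
  field_simp
  ring

theorem norm_one_sub_two_div_sq_add_one_sq_le (x : ℝ) : ‖1 - 2 / (x ^ 2 + 1) ^ 2‖ ≤ 1 := by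
  have hpos : 0 < 2 / (x ^ 2 + 1) ^ 2 := by positivity
  have hle : 2 / (x ^ 2 + 1) ^ 2 ≤ 2 :=
    div_le_self zero_le_two (one_le_pow₀ (by nlinarith))
  rw [Real.norm_eq_abs, abs_le]
  constructor <;> linarith

theorem tendsto_millsLowerBound_atBot : Tendsto millsLowerBound atBot (𝓝 0) := by
  refine squeeze_zero_norm (fun x ↦ ?_) tendsto_gaussPdf_atBot
  have hx : |x| / (x ^ 2 + 1) ≤ 1 := by
    rw [div_le_one (by positivity)]
    nlinarith [sq_abs x, abs_nonneg x]
  rw [millsLowerBound, norm_mul, norm_div, norm_neg, Real.norm_eq_abs, Real.norm_eq_abs,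
    Real.norm_eq_abs, abs_of_pos (gaussPdf_pos x), abs_of_pos (by positivity : 0 < x ^ 2 + 1)]
  exact mul_le_of_le_one_left (gaussPdf_pos x).le hx

theorem millsLowerBound_le_gaussCdf (a : ℝ) : millsLowerBound a ≤ gaussCdf a := by
  have hcont : Continuous fun x : ℝ ↦ 1 - 2 / (x ^ 2 + 1) ^ 2 :=
    continuous_const.sub (continuous_const.div (by fun_prop) fun x ↦ by positivity)
  have hint := integrable_gaussPdf.bdd_mul hcont.aestronglyMeasurable
    (.of_forall norm_one_sub_two_div_sq_add_one_sq_le)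
  have h := le_setIntegral_Iic_of_hasDerivAt (a := a) (fun x _ ↦ hasDerivAt_millsLowerBound x)
    hint.integrableOn tendsto_millsLowerBound_atBot integrable_gaussPdf.integrableOn
    fun x _ ↦ mul_le_of_le_one_left (gaussPdf_pos x).le (sub_le_self _ (by positivity))
  rwa [sub_zero] at h

theorem neg_le_gaussPdf_div_gaussCdf {a : ℝ} (ha : a < 0) : -a ≤ gaussPdf a / gaussCdf a := by
  have h := gaussCdf_le_gaussPdf_div_neg ha
  rw [le_div_iff₀ (neg_pos.2 ha)] at h
  rw [le_div_iff₀ (gaussCdf_pos a)]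
  linarith

theorem gaussPdf_div_gaussCdf_le {a : ℝ} (ha : a < 0) :
    gaussPdf a / gaussCdf a ≤ -a - a⁻¹ := by
  have hfactor : 0 ≤ -a - a⁻¹ := by linarith [inv_lt_zero.2 ha]
  rw [div_le_iff₀ (gaussCdf_pos a)]
  calc gaussPdf a = (-a - a⁻¹) * millsLowerBound a := by
        rw [millsLowerBound]
        field_simp [ha.ne]
        ring
    _ ≤ (-a - a⁻¹) * gaussCdf a :=
        mul_le_mul_of_nonneg_left (millsLowerBound_le_gaussCdf a) hfactor

theorem tg_activation_tendsto_zero_atBot :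
    Filter.Tendsto (fun α : ℝ => α + gaussPdf α / gaussCdf α)
      Filter.atBot (nhds 0) := by
  have hlim : Tendsto (fun a : ℝ ↦ -a⁻¹) atBot (𝓝 0) := by
    simpa using (tendsto_inv_atBot_zero (𝕜 := ℝ)).neg
  refine tendsto_of_tendsto_of_tendsto_of_le_of_le' tendsto_const_nhds hlim ?_ ?_
  · filter_upwards [eventually_lt_atBot 0] with a ha
    linarith [neg_le_gaussPdf_div_gaussCdf ha]
  · filter_upwards [eventually_lt_atBot 0] with a ha
    linarith [gaussPdf_div_gaussCdf_le ha]
end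

section
/- The derivative of the TED activation λ(α) = e^α/(e^α − 1) − 1/α equals 1/α² − e^α/(e^α − 1)², and this quantity is strictly positive for all α ≠ 0; hence λ is strictly monotone increasing. -/
/-!
On each of the half-lines `α < 0` and `α > 0` the derivative `1/α² - e^α/(e^α - 1)²` is
positive: writing `e^α - 1 = 2 e^{α/2} sinh (α/2)`, this is the inequality
`(α/2)² < sinh² (α/2)`. To compare values across `0`, note that
`2α(e^α - 1)(λ(α) - 1/2) = (α - 2)e^α + α + 2`; the right-hand side vanishes at `0` and has
derivative `(α - 1)e^α + 1 > 0` for `α ≠ 0` (this is `e^{-α} > 1 - α`), so it has the sign of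
`α`, and `λ < 1/2` on `α < 0` while `λ > 1/2` on `α > 0`.
-/

open Real Set

theorem StrictMonoOn.of_Iio_of_Ioi {α β : Type*} [LinearOrder α] [Preorder β] {f : α → β}
    {a : α} (hlt : StrictMonoOn f (Iio a)) (hgt : StrictMonoOn f (Ioi a))
    (hcross : ∀ x < a, ∀ y, a < y → f x < f y) : StrictMonoOn f {x | x ≠ a} := by
  intro x hx y hy hxy
  rcases hx.lt_or_gt with hxa | hax <;> rcases hy.lt_or_gt with hya | hay
  · exact hlt hxa hya hxy
  · exact hcross x hxa y hay
  · exact absurd (hya.trans hax) hxy.not_gt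
  · exact hgt hax hay hxy

namespace Real

lemma exp_sub_one_ne_zero {x : ℝ} (hx : x ≠ 0) : exp x - 1 ≠ 0 :=
  sub_ne_zero.mpr fun h => hx (exp_eq_one_iff x |>.mp h)

lemma mul_exp_sub_one_pos {x : ℝ} (hx : x ≠ 0) : 0 < x * (exp x - 1) := by
  rcases hx.lt_or_gt with hneg | hpos
  · exact mul_pos_of_neg_of_neg hneg (sub_neg.mpr (exp_lt_one_iff.mpr hneg))
  · exact mul_pos hpos (sub_pos.mpr (one_lt_exp_iff.mpr hpos))

lemma sq_lt_sinh_sq {x : ℝ} (hx : x ≠ 0) : x ^ 2 < sinh x ^ 2 := by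
  rw [sq_lt_sq, abs_sinh]
  exact self_lt_sinh_iff.mpr (abs_pos.mpr hx)

lemma exp_sub_one_eq_mul_sinh_half (x : ℝ) : exp x - 1 = 2 * exp (x / 2) * sinh (x / 2) := by
  have hsq : exp x = exp (x / 2) * exp (x / 2) := by rw [← exp_add, add_halves]
  have hinv : exp (x / 2) * exp (-(x / 2)) = 1 := by rw [← exp_add, add_neg_cancel, exp_zero]
  rw [sinh_eq]
  linear_combination hsq + hinv

lemma sq_mul_exp_lt_exp_sub_one_sq {x : ℝ} (hx : x ≠ 0) : x ^ 2 * exp x < (exp x - 1) ^ 2 := by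
  have hhalf : exp (x / 2) ^ 2 = exp x := by rw [← exp_nat_mul]; ring_nf
  have hsinh := sq_lt_sinh_sq (div_ne_zero hx two_ne_zero)
  calc x ^ 2 * exp x = 4 * exp x * (x / 2) ^ 2 := by ring
    _ < 4 * exp x * sinh (x / 2) ^ 2 := by gcongr
    _ = (exp x - 1) ^ 2 := by rw [exp_sub_one_eq_mul_sinh_half, ← hhalf]; ring

lemma sub_one_mul_exp_add_one_pos {x : ℝ} (hx : x ≠ 0) : 0 < (x - 1) * exp x + 1 := by
  have hlt := add_one_lt_exp (neg_ne_zero.mpr hx)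
  have hinv : exp (-x) * exp x = 1 := by rw [← exp_add, neg_add_cancel, exp_zero]
  nlinarith [mul_lt_mul_of_pos_right hlt (exp_pos x)]

end Real

noncomputable def tedActivation (a : ℝ) : ℝ := exp a / (exp a - 1) - 1 / a

lemma hasDerivAt_tedActivation {x : ℝ} (hx : x ≠ 0) :
    HasDerivAt tedActivation (1 / x ^ 2 - exp x / (exp x - 1) ^ 2) x := by
  have hquot := (hasDerivAt_exp x).div ((hasDerivAt_exp x).sub_const 1) (exp_sub_one_ne_zero hx)
  have hrecip : HasDerivAt (fun a : ℝ => 1 / a) (-(x ^ 2)⁻¹) x := by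
    simpa only [one_div] using hasDerivAt_inv hx
  refine (hquot.sub hrecip).congr_deriv ?_
  field_simp [exp_sub_one_ne_zero hx]
  ring

lemma tedActivation_deriv_pos {x : ℝ} (hx : x ≠ 0) :
    0 < 1 / x ^ 2 - exp x / (exp x - 1) ^ 2 := by
  have hx2 : 0 < x ^ 2 := by positivity
  have he2 : 0 < (exp x - 1) ^ 2 := by positivity [exp_sub_one_ne_zero hx]
  rw [sub_pos, div_lt_div_iff₀ he2 hx2, one_mul, mul_comm]
  exact sq_mul_exp_lt_exp_sub_one_sq hx

lemma strictMonoOn_tedActivation {D : Set ℝ} (hD : Convex ℝ D) (h0 : (0 : ℝ) ∉ D) :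
    StrictMonoOn tedActivation D := by
  have hne {x : ℝ} (hx : x ∈ D) : x ≠ 0 := fun h => h0 (h ▸ hx)
  refine strictMonoOn_of_deriv_pos hD
    (fun x hx => (hasDerivAt_tedActivation (hne hx)).continuousAt.continuousWithinAt) ?_
  intro x hx
  have hx0 := hne (interior_subset hx)
  rw [(hasDerivAt_tedActivation hx0).deriv]
  exact tedActivation_deriv_pos hx0

noncomputable def tedGap (a : ℝ) : ℝ := (a - 2) * exp a + a + 2

lemma tedActivation_sub_half {x : ℝ} (hx : x ≠ 0) :
    tedActivation x - 1 / 2 = tedGap x / (2 * (x * (exp x - 1))) := by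
  unfold tedActivation tedGap
  field_simp [exp_sub_one_ne_zero hx]
  ring

lemma hasDerivAt_tedGap (x : ℝ) : HasDerivAt tedGap ((x - 1) * exp x + 1) x := by
  have h := ((((hasDerivAt_id x).sub_const 2).mul (hasDerivAt_exp x)).add
    (hasDerivAt_id x)).add_const 2
  exact h.congr_deriv (by simp only [id]; ring)

lemma strictMono_tedGap : StrictMono tedGap := by
  have hmono {D : Set ℝ} (hD : Convex ℝ D) (hint : interior D ⊆ {x | x ≠ 0}) :
      StrictMonoOn tedGap D := by
    refine strictMonoOn_of_deriv_pos hD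
      (fun x _ => (hasDerivAt_tedGap x).continuousAt.continuousWithinAt) fun x hx => ?_
    rw [(hasDerivAt_tedGap x).deriv]
    exact sub_one_mul_exp_add_one_pos (hint hx)
  refine StrictMonoOn.Iic_union_Ici (a := 0) (hmono (convex_Iic 0) ?_) (hmono (convex_Ici 0) ?_)
  · rw [interior_Iic]; exact fun x hx => hx.ne
  · rw [interior_Ici]; exact fun x hx => hx.ne'

lemma tedGap_zero : tedGap 0 = 0 := by simp [tedGap]

lemma tedActivation_lt_half {x : ℝ} (hx : x < 0) : tedActivation x < 1 / 2 := by
  have hgap : tedGap x < 0 := tedGap_zero ▸ strictMono_tedGap hx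
  have hsub := tedActivation_sub_half hx.ne
  have := div_neg_of_neg_of_pos hgap (mul_pos two_pos (mul_exp_sub_one_pos hx.ne))
  linarith

lemma half_lt_tedActivation {x : ℝ} (hx : 0 < x) : 1 / 2 < tedActivation x := by
  have hgap : 0 < tedGap x := tedGap_zero ▸ strictMono_tedGap hx
  have hsub := tedActivation_sub_half hx.ne'
  have := div_pos hgap (mul_pos two_pos (mul_exp_sub_one_pos hx.ne'))
  linarith

theorem ted_activation_deriv_pos_strictMono :
    (∀ α : ℝ, α ≠ 0 →
      HasDerivAt (fun a : ℝ => Real.exp a / (Real.exp a - 1) - 1 / a)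
        (1 / α ^ 2 - Real.exp α / (Real.exp α - 1) ^ 2) α ∧
      0 < 1 / α ^ 2 - Real.exp α / (Real.exp α - 1) ^ 2) ∧
    StrictMonoOn (fun a : ℝ => Real.exp a / (Real.exp a - 1) - 1 / a)
      {α : ℝ | α ≠ 0} :=
  ⟨fun _ hα => ⟨hasDerivAt_tedActivation hα, tedActivation_deriv_pos hα⟩,
    StrictMonoOn.of_Iio_of_Ioi
      (strictMonoOn_tedActivation (convex_Iio 0) self_notMem_Iio)
      (strictMonoOn_tedActivation (convex_Ioi 0) self_notMem_Ioi)
      fun _ hx _ hy => (tedActivation_lt_half hx).trans (half_lt_tedActivation hy)⟩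
end
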